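/- Let (G,w) be a MinPAC instance with w : A(G) → Q for a set Q = {p_1, …, p_q} ⊆ ℕ, and let X = {v_1, …, v_x} be a vertex cover of the underlying undirected graph of G. Let P_{r_1,…,r_{2x}} (with r_1,…,r_{2x} ∈ [q+1]) be a class of the vertex cover partition containing at least two vertices, and let u ∈ P_{r_1,…,r_{2x}}. Then the induced subgraph G' = G[V(G) \ {u}] is strongly connected and opt((G,w)) = opt((G',w)) + min_{uv ∈ A(G)} w(uv). -/

import Mathlib

/-!
Two vertices `u ≠ u'` outside a vertex cover with the same weight profile towards the cover are
non-adjacent twins: they have the same in- and out-arcs, with the same weights. Collapsing `u`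
onto `u'` turns an optimal solution of `G` into a solution of `G - u` whose cost at `u'` is at
most `max(cost u, cost u')`, so it saves at least `min(cost u, cost u')`, which is at least the
cheapest out-arc weight `m` of `u` (both `u` and `u'` have out-arcs of weight `≥ m`). Conversely,
an optimal solution of `G - u` extends to `G` by the cheapest arc `ux` and by a copy `zu` of an
arc `zu'` of the solution; the copy costs nothing extra at `z`, so the extension costs `m` more.
-/

/-- A directed graph (given by its arc relation) is strongly connected if every
vertex can reach every other vertex by a directed path. -/
def StronglyConnected {V : Type*} (A : V → V → Prop) : Prop :=
  ∀ u v : V, Relation.ReflTransGen A u v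

open scoped Classical in
/-- The cost paid by a vertex `v` in the subgraph with arcs `B`:
the maximum weight of an outgoing arc of `v` (0 if there is none). -/
noncomputable def vertexCost {V : Type*} [Fintype V] (B : V → V → Prop)
    (w : V → V → ℕ) (v : V) : ℕ :=
  Finset.univ.sup fun u => if B v u then w v u else 0

/-- The total cost of the subgraph with arcs `B`. -/
noncomputable def pacCost {V : Type*} [Fintype V] (B : V → V → Prop)
    (w : V → V → ℕ) : ℕ :=
  ∑ v, vertexCost B w v

/-- A solution of a MinPAC instance `(A, w)`: a strongly connected spanning
subgraph (given by its arc relation `B`). -/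
def IsPACSolution {V : Type*} (A B : V → V → Prop) : Prop :=
  (∀ x y, B x y → A x y) ∧ StronglyConnected B

/-- The optimal cost of a MinPAC instance. -/
noncomputable def pacOpt {V : Type*} [Fintype V] (A : V → V → Prop)
    (w : V → V → ℕ) : ℕ :=
  sInf { c | ∃ B : V → V → Prop, IsPACSolution A B ∧ pacCost B w = c }

section TwinReduction

variable {V W : Type*}

theorem ite_coe_top_eq_ite_coe_top_iff {P Q : Prop} [Decidable P] [Decidable Q] {a b : ℕ} :
    ((if P then (a : ℕ∞) else ⊤) = if Q then (b : ℕ∞) else ⊤) ↔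
      (P ↔ Q) ∧ (P → a = b) := by
  by_cases hP : P <;> by_cases hQ : Q <;> simp [hP, hQ]

theorem StronglyConnected.of_surjective {R : V → V → Prop} {S : W → W → Prop}
    (hR : StronglyConnected R) {f : V → W} (hf : f.Surjective)
    (hmap : ∀ x y, R x y → S (f x) (f y)) : StronglyConnected S := by
  intro a b
  obtain ⟨x, rfl⟩ := hf a
  obtain ⟨y, rfl⟩ := hf b
  exact (hR x y).lift f hmap

theorem StronglyConnected.exists_out {R : V → V → Prop} (hR : StronglyConnected R) {u v : V}
    (hne : u ≠ v) : ∃ y, R u y := by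
  rcases (hR u v).cases_head with rfl | ⟨y, hy, -⟩
  · exact absurd rfl hne
  · exact ⟨y, hy⟩

theorem StronglyConnected.exists_in {R : V → V → Prop} (hR : StronglyConnected R) {u v : V}
    (hne : u ≠ v) : ∃ x, R x v := by
  rcases (hR u v).cases_tail with rfl | ⟨x, -, hx⟩
  · exact absurd rfl hne
  · exact ⟨x, hx⟩

noncomputable def minOutWeight (A : V → V → Prop) (w : V → V → ℕ) (v : V) : ℕ :=
  sInf {c | ∃ x, A v x ∧ w v x = c}

theorem minOutWeight_le {A : V → V → Prop} {w : V → V → ℕ} {v y : V} (h : A v y) :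
    minOutWeight A w v ≤ w v y :=
  Nat.sInf_le ⟨y, h, rfl⟩

theorem exists_weight_eq_minOutWeight {A : V → V → Prop} (w : V → V → ℕ) {v y : V}
    (h : A v y) : ∃ x, A v x ∧ w v x = minOutWeight A w v :=
  Nat.sInf_mem (s := {c | ∃ x, A v x ∧ w v x = c}) ⟨_, y, h, rfl⟩

section Cost

variable [Fintype V]

theorem vertexCost_le {B : V → V → Prop} {w : V → V → ℕ} {v : V} {c : ℕ}
    (h : ∀ y, B v y → w v y ≤ c) : vertexCost B w v ≤ c := by
  classical
  refine Finset.sup_le fun y _ => ?_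
  split_ifs with hy
  · exact h y hy
  · exact c.zero_le

theorem le_vertexCost {B : V → V → Prop} {w : V → V → ℕ} {v y : V} (h : B v y) :
    w v y ≤ vertexCost B w v := by
  unfold vertexCost
  refine le_trans ?_ (Finset.le_sup (Finset.mem_univ y))
  rw [if_pos h]

theorem vertexCost_map_le [Fintype W] {C : V → V → Prop} {w : V → V → ℕ}
    {w' : W → W → ℕ} {f : V → W} (hw : ∀ x y, C x y → w' (f x) (f y) ≤ w x y)
    {a : W} {c : ℕ} (hc : ∀ x, f x = a → vertexCost C w x ≤ c) :
    vertexCost (Relation.Map C f f) w' a ≤ c := by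
  refine vertexCost_le ?_
  rintro _ ⟨x, y, hxy, rfl, rfl⟩
  exact (hw x y hxy).trans ((le_vertexCost hxy).trans (hc x rfl))

theorem pacOpt_le {A B : V → V → Prop} (w : V → V → ℕ) (hB : IsPACSolution A B) :
    pacOpt A w ≤ pacCost B w :=
  Nat.sInf_le ⟨B, hB, rfl⟩

theorem exists_pacCost_eq_pacOpt {A : V → V → Prop} (w : V → V → ℕ)
    (hA : StronglyConnected A) :
    ∃ B, IsPACSolution A B ∧ pacCost B w = pacOpt A w :=
  Nat.sInf_mem (s := {c | ∃ B, IsPACSolution A B ∧ pacCost B w = c})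
    ⟨_, A, ⟨fun _ _ h => h, hA⟩, rfl⟩

theorem minOutWeight_le_vertexCost {A B : V → V → Prop} {w : V → V → ℕ} {v y : V}
    (hBA : B ≤ A) (h : B v y) : minOutWeight A w v ≤ vertexCost B w v :=
  (minOutWeight_le (hBA _ _ h)).trans (le_vertexCost h)

end Cost

section DeleteVertex

def deleteVertex {α : Type*} (R : V → V → α) (u : V) (a b : {x // x ≠ u}) : α :=
  R a b

variable {u : V} {B : {x // x ≠ u} → {x // x ≠ u} → Prop} {x : V} {z : {x // x ≠ u}}

def attachVertex (B : {x // x ≠ u} → {x // x ≠ u} → Prop) (x : V) (z : {x // x ≠ u}) :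
    V → V → Prop :=
  fun a b => Relation.Map B Subtype.val Subtype.val a b ∨ (a = u ∧ b = x) ∨ (a = z ∧ b = u)

theorem attachVertex_le {A : V → V → Prop} (hB : B ≤ deleteVertex A u) (hx : A u x)
    (hz : A z u) : attachVertex B x z ≤ A := by
  rintro _ _ (⟨a, b, h, rfl, rfl⟩ | ⟨rfl, rfl⟩ | ⟨rfl, rfl⟩)
  exacts [hB a b h, hx, hz]

theorem stronglyConnected_attachVertex (hB : StronglyConnected B) (hx : x ≠ u) :
    StronglyConnected (attachVertex B x z) := by
  have lift (a b : {x // x ≠ u}) : Relation.ReflTransGen (attachVertex B x z) a b :=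
    (hB a b).lift (p := attachVertex B x z) Subtype.val fun a b h => Or.inl ⟨a, b, h, rfl, rfl⟩
  have to_u : ∀ a, Relation.ReflTransGen (attachVertex B x z) a u := fun a => by
    rcases eq_or_ne a u with rfl | ha
    · exact .refl
    · exact (lift ⟨a, ha⟩ z).tail (Or.inr (Or.inr ⟨rfl, rfl⟩))
  have from_u : ∀ b, Relation.ReflTransGen (attachVertex B x z) u b := fun b => by
    rcases eq_or_ne b u with rfl | hb
    · exact .refl
    · exact .head (Or.inr (Or.inl ⟨rfl, rfl⟩)) (lift ⟨x, hx⟩ ⟨b, hb⟩)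
  exact fun a b => (to_u a).trans (from_u b)

theorem pacCost_attachVertex_le [Fintype V] [DecidableEq V] {w : V → V → ℕ}
    (hz : w z u ≤ vertexCost B (deleteVertex w u) z) :
    pacCost (attachVertex B x z) w ≤ w u x + pacCost B (deleteVertex w u) := by
  have cost_u : vertexCost (attachVertex B x z) w u ≤ w u x := by
    refine vertexCost_le ?_
    rintro _ (⟨a, b, -, ha, rfl⟩ | ⟨-, rfl⟩ | ⟨hz, rfl⟩)
    exacts [absurd ha a.2, le_rfl, absurd hz.symm z.2]
  have cost_ne (a : {x // x ≠ u}) :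
      vertexCost (attachVertex B x z) w a ≤ vertexCost B (deleteVertex w u) a := by
    refine vertexCost_le ?_
    rintro _ (⟨a', b, h, ha, rfl⟩ | ⟨ha, -⟩ | ⟨ha, rfl⟩)
    · obtain rfl := Subtype.ext ha
      exact le_vertexCost (w := deleteVertex w u) h
    · exact absurd ha a.2
    · obtain rfl := Subtype.ext ha
      exact hz
  calc pacCost (attachVertex B x z) w
      = vertexCost (attachVertex B x z) w u +
          ∑ a : {x // x ≠ u}, vertexCost (attachVertex B x z) w a :=
        Fintype.sum_eq_add_sum_subtype_ne _ u
    _ ≤ w u x + pacCost B (deleteVertex w u) :=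
        add_le_add cost_u (Finset.sum_le_sum fun a _ => cost_ne a)

def collapse [DecidableEq V] (u : V) (t : {x // x ≠ u}) (v : V) : {x // x ≠ u} :=
  if h : v = u then t else ⟨v, h⟩

variable [DecidableEq V] {t : {x // x ≠ u}}

theorem collapse_self : collapse u t u = t :=
  dif_pos rfl

theorem collapse_of_ne {v : V} (h : v ≠ u) : collapse u t v = ⟨v, h⟩ :=
  dif_neg h

theorem collapse_surjective : (collapse u t).Surjective :=
  fun a => ⟨a, collapse_of_ne a.2⟩

theorem pacCost_map_collapse_add_le [Fintype V] {C : V → V → Prop} {w : V → V → ℕ}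
    {w' : {x // x ≠ u} → {x // x ≠ u} → ℕ}
    (hw : ∀ x y, C x y → w' (collapse u t x) (collapse u t y) ≤ w x y) {m : ℕ}
    (hmu : m ≤ vertexCost C w u) (hmt : m ≤ vertexCost C w t) :
    pacCost (Relation.Map C (collapse u t) (collapse u t)) w' + m ≤ pacCost C w := by
  set C' := Relation.Map C (collapse u t) (collapse u t)
  have cost_t : vertexCost C' w' t ≤ max (vertexCost C w u) (vertexCost C w t) := by
    refine vertexCost_map_le hw fun x hx => ?_
    rcases eq_or_ne x u with rfl | hxu
    · exact le_max_left _ _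
    · rw [collapse_of_ne hxu] at hx
      subst hx
      exact le_max_right _ _
  have cost_ne (a : {x // x ≠ u}) (ha : a ≠ t) : vertexCost C' w' a ≤ vertexCost C w a := by
    refine vertexCost_map_le hw fun x hx => ?_
    rcases eq_or_ne x u with rfl | hxu
    · exact absurd (collapse_self.symm.trans hx).symm ha
    · rw [collapse_of_ne hxu] at hx
      subst hx
      rfl
  have hsum : ∑ a ∈ Finset.univ.erase t, vertexCost C' w' a ≤
      ∑ a ∈ Finset.univ.erase t, vertexCost C w a :=
    Finset.sum_le_sum fun a ha => cost_ne a (Finset.ne_of_mem_erase ha)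
  rw [pacCost, pacCost, Fintype.sum_eq_add_sum_subtype_ne _ u,
    ← Finset.add_sum_erase _ (fun a => vertexCost C' w' a) (Finset.mem_univ t),
    ← Finset.add_sum_erase _ (fun a : {x // x ≠ u} => vertexCost C w a) (Finset.mem_univ t)]
  omega

end DeleteVertex

structure IsTwin (A : V → V → Prop) (w : V → V → ℕ) (u u' : V) : Prop where
  out_iff : ∀ y, A u y ↔ A u' y
  in_iff : ∀ x, A x u ↔ A x u'
  out_weight : ∀ y, A u y → w u y = w u' y
  in_weight : ∀ x, A x u → w x u = w x u'

namespace IsTwin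

variable {A : V → V → Prop} {w : V → V → ℕ} {u u' : V}

theorem minOutWeight_eq (ht : IsTwin A w u u') : minOutWeight A w u = minOutWeight A w u' := by
  refine congrArg sInf (Set.ext fun c => ⟨?_, ?_⟩)
  · rintro ⟨y, hy, rfl⟩
    exact ⟨y, (ht.out_iff y).1 hy, (ht.out_weight y hy).symm⟩
  · rintro ⟨y, hy, rfl⟩
    exact ⟨y, (ht.out_iff y).2 hy, ht.out_weight y ((ht.out_iff y).2 hy)⟩

theorem map_collapse [DecidableEq V] (ht : IsTwin A w u u') (hloop : ¬A u u) (hu' : u' ≠ u)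
    {x y : V} (h : A x y) :
    A (collapse u ⟨u', hu'⟩ x) (collapse u ⟨u', hu'⟩ y) ∧
      w (collapse u ⟨u', hu'⟩ x) (collapse u ⟨u', hu'⟩ y) = w x y := by
  rcases eq_or_ne x u with hx | hx <;> rcases eq_or_ne y u with hy | hy <;> subst_vars
  · exact absurd h hloop
  · rw [collapse_self, collapse_of_ne hy]
    exact ⟨(ht.out_iff y).1 h, (ht.out_weight y h).symm⟩
  · rw [collapse_self, collapse_of_ne hx]
    exact ⟨(ht.in_iff x).1 h, (ht.in_weight x h).symm⟩
  · rw [collapse_of_ne hx, collapse_of_ne hy]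
    exact ⟨h, rfl⟩

theorem stronglyConnected_deleteVertex (ht : IsTwin A w u u') (hloop : ¬A u u) (hne : u ≠ u')
    (hA : StronglyConnected A) : StronglyConnected (deleteVertex A u) := by
  classical
  exact hA.of_surjective collapse_surjective fun _ _ h => (ht.map_collapse hloop hne.symm h).1

variable [Fintype V] [DecidableEq V]

theorem pacOpt_le_pacOpt_deleteVertex_add (ht : IsTwin A w u u') (hloop : ¬A u u)
    (hne : u ≠ u') (hA : StronglyConnected A) :
    pacOpt A w ≤ pacOpt (deleteVertex A u) (deleteVertex w u) + minOutWeight A w u := by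
  obtain ⟨B, ⟨hBA, hB⟩, hBopt⟩ :=
    exists_pacCost_eq_pacOpt (deleteVertex w u) (ht.stronglyConnected_deleteVertex hloop hne hA)
  obtain ⟨x, hx, hxw⟩ := exists_weight_eq_minOutWeight w (hA.exists_out hne).choose_spec
  have hxu : x ≠ u := by rintro rfl; exact hloop hx
  have hxu' : x ≠ u' := by rintro rfl; exact hloop ((ht.in_iff u).2 hx)
  obtain ⟨z, hz⟩ :=
    hB.exists_in (u := ⟨x, hxu⟩) (v := ⟨u', hne.symm⟩) (by simpa using hxu')
  have hzu : A z u := (ht.in_iff z).2 (hBA _ _ hz)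
  have hsol : IsPACSolution A (attachVertex B x z) :=
    ⟨attachVertex_le hBA hx hzu, stronglyConnected_attachVertex hB hxu⟩
  calc pacOpt A w ≤ pacCost (attachVertex B x z) w := pacOpt_le w hsol
    _ ≤ w u x + pacCost B (deleteVertex w u) :=
      pacCost_attachVertex_le
        ((ht.in_weight z hzu).trans_le (le_vertexCost (w := deleteVertex w u) hz))
    _ = pacOpt (deleteVertex A u) (deleteVertex w u) + minOutWeight A w u := by
      rw [hxw, hBopt, add_comm]

theorem pacOpt_deleteVertex_add_le_pacOpt (ht : IsTwin A w u u') (hloop : ¬A u u)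
    (hne : u ≠ u') (hA : StronglyConnected A) :
    pacOpt (deleteVertex A u) (deleteVertex w u) + minOutWeight A w u ≤ pacOpt A w := by
  obtain ⟨C, ⟨hCA, hC⟩, hCopt⟩ := exists_pacCost_eq_pacOpt w hA
  set f := collapse u ⟨u', hne.symm⟩
  have hsol : IsPACSolution (deleteVertex A u) (Relation.Map C f f) := by
    refine ⟨?_, hC.of_surjective collapse_surjective fun x y h => ⟨x, y, h, rfl, rfl⟩⟩
    rintro _ _ ⟨x, y, h, rfl, rfl⟩
    exact (ht.map_collapse hloop hne.symm (hCA x y h)).1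
  have hw (x y : V) (h : C x y) : deleteVertex w u (f x) (f y) ≤ w x y :=
    (ht.map_collapse hloop hne.symm (hCA x y h)).2.le
  have hmu : minOutWeight A w u ≤ vertexCost C w u :=
    minOutWeight_le_vertexCost hCA (hC.exists_out hne).choose_spec
  have hmu' : minOutWeight A w u ≤ vertexCost C w u' :=
    ht.minOutWeight_eq ▸ minOutWeight_le_vertexCost hCA (hC.exists_out hne.symm).choose_spec
  calc pacOpt (deleteVertex A u) (deleteVertex w u) + minOutWeight A w u
      ≤ pacCost (Relation.Map C f f) (deleteVertex w u) + minOutWeight A w u :=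
        Nat.add_le_add_right (pacOpt_le _ hsol) _
    _ ≤ pacOpt A w := hCopt ▸ pacCost_map_collapse_add_le hw hmu hmu'

end IsTwin

open scoped Classical in
theorem isTwin_of_profile_eq {A : V → V → Prop} {w : V → V → ℕ} {X : Finset V}
    (hX : ∀ x y, A x y → x ∈ X ∨ y ∈ X) {u u' : V} (hu : u ∉ X) (hu' : u' ∉ X)
    (hprof : ∀ x ∈ X,
      ((if A u x then (w u x : ℕ∞) else ⊤) = (if A u' x then (w u' x : ℕ∞) else ⊤)) ∧
      ((if A x u then (w x u : ℕ∞) else ⊤) = (if A x u' then (w x u' : ℕ∞) else ⊤))) :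
    IsTwin A w u u' := by
  have out_eq (y : V) :
      (if A u y then (w u y : ℕ∞) else ⊤) = if A u' y then (w u' y : ℕ∞) else ⊤ := by
    by_cases hy : y ∈ X
    · exact (hprof y hy).1
    · rw [if_neg fun h => (hX _ _ h).elim hu hy, if_neg fun h => (hX _ _ h).elim hu' hy]
  have in_eq (x : V) :
      (if A x u then (w x u : ℕ∞) else ⊤) = if A x u' then (w x u' : ℕ∞) else ⊤ := by
    by_cases hx : x ∈ X
    · exact (hprof x hx).2
    · rw [if_neg fun h => (hX _ _ h).elim hx hu, if_neg fun h => (hX _ _ h).elim hx hu']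
  exact ⟨fun y => (ite_coe_top_eq_ite_coe_top_iff.1 (out_eq y)).1,
    fun x => (ite_coe_top_eq_ite_coe_top_iff.1 (in_eq x)).1,
    fun y => (ite_coe_top_eq_ite_coe_top_iff.1 (out_eq y)).2,
    fun x => (ite_coe_top_eq_ite_coe_top_iff.1 (in_eq x)).2⟩

end TwinReduction

open scoped Classical in
theorem opt_eq_of_removing_twin_outside_vertex_cover_general
    {V : Type*} [Fintype V] [DecidableEq V] (A : V → V → Prop) (w : V → V → ℕ)
    (hG : StronglyConnected A)
    (X : Finset V) (hX : ∀ x y, A x y → x ∈ X ∨ y ∈ X)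
    (u u' : V) (hne : u ≠ u') (hu : u ∉ X) (hu' : u' ∉ X)
    (hprof : ∀ x ∈ X,
      ((if A u x then (w u x : ℕ∞) else ⊤) = (if A u' x then (w u' x : ℕ∞) else ⊤)) ∧
      ((if A x u then (w x u : ℕ∞) else ⊤) = (if A x u' then (w x u' : ℕ∞) else ⊤))) :
    StronglyConnected (fun a b : {x : V // x ≠ u} => A a.1 b.1) ∧
    pacOpt A w =
      pacOpt (fun a b : {x : V // x ≠ u} => A a.1 b.1)
          (fun a b : {x : V // x ≠ u} => w a.1 b.1)
        + sInf {c | ∃ x, A u x ∧ w u x = c} := by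
  have hloop : ¬A u u := fun h => (hX u u h).elim hu hu
  have ht : IsTwin A w u u' := isTwin_of_profile_eq hX hu hu' hprof
  exact ⟨ht.stronglyConnected_deleteVertex hloop hne hG,
    le_antisymm (ht.pacOpt_le_pacOpt_deleteVertex_add hloop hne hG)
      (ht.pacOpt_deleteVertex_add_le_pacOpt hloop hne hG)⟩

open scoped Classical in
/-- Let `(G, w)` be a MinPAC instance with weights taking values in a set
`Q ⊆ ℕ`, and let `X` be a vertex cover of the underlying undirected graph of `G`.
If some class of the vertex cover partition contains at least two vertices
(`u` and a witness `u'`, i.e. two vertices outside `X` with identical extended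
weight profiles `w̄(·, v_i), w̄(v_i, ·)` towards every cover vertex, where
`w̄(xy) = w(xy)` if `xy ∈ A(G)` and `∞` otherwise), then deleting `u` yields a
strongly connected induced subgraph `G'` with
`opt((G, w)) = opt((G', w)) + min_{uv ∈ A(G)} w(uv)`. -/
theorem opt_eq_of_removing_twin_outside_vertex_cover
    {V : Type*} [Fintype V] [DecidableEq V] (A : V → V → Prop) (w : V → V → ℕ)
    (hG : StronglyConnected A)
    (Q : Finset ℕ) (hwQ : ∀ x y, A x y → w x y ∈ Q)
    (X : Finset V) (hX : ∀ x y, A x y → x ∈ X ∨ y ∈ X)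
    (u u' : V) (hne : u ≠ u') (hu : u ∉ X) (hu' : u' ∉ X)
    (hprof : ∀ x ∈ X,
      ((if A u x then (w u x : ℕ∞) else ⊤) = (if A u' x then (w u' x : ℕ∞) else ⊤)) ∧
      ((if A x u then (w x u : ℕ∞) else ⊤) = (if A x u' then (w x u' : ℕ∞) else ⊤))) :
    StronglyConnected (fun a b : {x : V // x ≠ u} => A a.1 b.1) ∧
    pacOpt A w =
      pacOpt (fun a b : {x : V // x ≠ u} => A a.1 b.1)
          (fun a b : {x : V // x ≠ u} => w a.1 b.1)
        + sInf {c | ∃ x, A u x ∧ w u x = c} :=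
  opt_eq_of_removing_twin_outside_vertex_cover_general A w hG X hX u u' hne hu hu' hprof
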